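/- arXiv:1401.1598 — 2 statements merged into one kernel-verified Lean document; each statement's English description precedes it below -/
import Mathlib

section
/- Let q be a prime power and b ≥ 2 an integer. Then the coefficients of L(u) = ∏_{i=1}^∞ (1 - u q^{-bi}) satisfy |[u^c]L| ≤ 2 q^b · q^{-bc} for all c ≥ 1. -/
/-!
Write `t = q^{-b} ≤ 1/2` and `P_m = ∏_{i<m} (1 - t^{i+1} u)`. Multiplying by the next factor gives
`[u^{c+1}] P_{m+1} = [u^{c+1}] P_m - t^{m+1} [u^c] P_m`, and `[u^{c+1}] P_m = 0` for `m ≤ c`, so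
`|[u^{c+1}] P_m| ≤ (t^{c+1} + t^{c+2} + ⋯) · sup_j |[u^c] P_j| = t^{c+1}/(1-t) · sup_j |[u^c] P_j|`.
Hence `|[u^c] P_m| ≤ ∏_{i<c} t^{i+1}/(1-t)`, uniformly in `m`, and for `t ≤ 1/2` every factor is
at most `1` while the last one is at most `2 t^c`.
-/

open Polynomial Finset

noncomputable def partialProd {R : Type*} [CommRing R] (x : ℕ → R) (m : ℕ) : R[X] :=
  ∏ i ∈ range m, (1 - C (x i) * X)

section Coefficients

variable {R : Type*} [CommRing R] (x : ℕ → R)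

lemma coeff_partialProd_zero (m : ℕ) : (partialProd x m).coeff 0 = 1 := by
  simp [partialProd, coeff_zero_eq_eval_zero, eval_prod]

lemma coeff_partialProd_succ_succ (m n : ℕ) :
    (partialProd x (m + 1)).coeff (n + 1) =
      (partialProd x m).coeff (n + 1) - x m * (partialProd x m).coeff n := by
  rw [partialProd, prod_range_succ, ← partialProd, mul_sub, mul_one, mul_left_comm,
    coeff_sub, coeff_C_mul, coeff_mul_X]

lemma coeff_partialProd_of_lt {m n : ℕ} (h : m < n) : (partialProd x m).coeff n = 0 := by
  induction m generalizing n with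
  | zero => simp [partialProd, coeff_one, h.ne']
  | succ m ih =>
    obtain ⟨n, rfl⟩ : ∃ k, n = k + 1 := ⟨n - 1, by omega⟩
    rw [coeff_partialProd_succ_succ, ih (by omega), ih (by omega)]
    ring

end Coefficients

lemma abs_coeff_succ_partialProd_le {x y : ℕ → ℝ} (hxy : ∀ i, |x i| ≤ y i) {c : ℕ} {B : ℝ}
    (hB : ∀ j, |(partialProd x j).coeff c| ≤ B) {m : ℕ} (hm : c ≤ m) :
    |(partialProd x m).coeff (c + 1)| ≤ B * ∑ j ∈ Ico c m, y j := by
  induction m, hm using Nat.le_induction with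
  | base => simp [coeff_partialProd_of_lt x (Nat.lt_succ_self c)]
  | succ m hm ih =>
    rw [coeff_partialProd_succ_succ, sum_Ico_succ_top hm, mul_add]
    calc |(partialProd x m).coeff (c + 1) - x m * (partialProd x m).coeff c|
        ≤ |(partialProd x m).coeff (c + 1)| + |x m| * |(partialProd x m).coeff c| := by
          rw [← abs_mul]
          exact abs_sub _ _
      _ ≤ B * ∑ j ∈ Ico c m, y j + y m * B := by
          gcongr
          · exact (abs_nonneg _).trans (hxy m)
          · exact hxy m
          · exact hB m
      _ = B * ∑ j ∈ Ico c m, y j + B * y m := by ring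

noncomputable def coeffBound (t : ℝ) (c : ℕ) : ℝ :=
  ∏ i ∈ range c, t ^ (i + 1) / (1 - t)

section Bounds

variable {t : ℝ}

lemma coeffBound_nonneg (ht0 : 0 ≤ t) (ht1 : t < 1) (c : ℕ) : 0 ≤ coeffBound t c :=
  prod_nonneg fun _ _ => div_nonneg (pow_nonneg ht0 _) (sub_nonneg.mpr ht1.le)

lemma abs_coeff_partialProd_le_coeffBound {x : ℕ → ℝ} (ht0 : 0 ≤ t) (ht1 : t < 1)
    (hx : ∀ i, |x i| ≤ t ^ (i + 1)) (c m : ℕ) :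
    |(partialProd x m).coeff c| ≤ coeffBound t c := by
  induction c generalizing m with
  | zero => simp [coeff_partialProd_zero, coeffBound]
  | succ c ih =>
    rcases lt_or_ge m (c + 1) with hm | hm
    · rw [coeff_partialProd_of_lt x hm, abs_zero]
      exact coeffBound_nonneg ht0 ht1 _
    have hgeom : ∑ j ∈ Ico c m, t ^ (j + 1) ≤ t ^ (c + 1) / (1 - t) := by
      calc ∑ j ∈ Ico c m, t ^ (j + 1) = (∑ j ∈ Ico c m, t ^ j) * t := by
            simp_rw [sum_mul, pow_succ]
        _ ≤ t ^ c / (1 - t) * t :=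
            mul_le_mul_of_nonneg_right (geom_sum_Ico_le_of_lt_one ht0 ht1) ht0
        _ = t ^ (c + 1) / (1 - t) := by ring
    calc |(partialProd x m).coeff (c + 1)|
        ≤ coeffBound t c * ∑ j ∈ Ico c m, t ^ (j + 1) :=
          abs_coeff_succ_partialProd_le hx ih (by omega)
      _ ≤ coeffBound t c * (t ^ (c + 1) / (1 - t)) :=
          mul_le_mul_of_nonneg_left hgeom (coeffBound_nonneg ht0 ht1 c)
      _ = coeffBound t (c + 1) := (prod_range_succ _ _).symm

lemma coeffBound_le_two_mul_pow (ht0 : 0 ≤ t) (ht : t ≤ 1 / 2) (c : ℕ) :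
    coeffBound t c ≤ 2 * t ^ c := by
  have hfactor : ∀ i : ℕ, t ^ (i + 1) / (1 - t) ≤ 2 * t ^ (i + 1) := fun i => by
    rw [div_le_iff₀ (by linarith)]
    nlinarith [pow_nonneg ht0 (i + 1)]
  have hsmall : ∀ i : ℕ, 2 * t ^ (i + 1) ≤ 1 := fun i => by
    linarith [pow_le_of_le_one ht0 (by linarith) (by omega : i + 1 ≠ 0)]
  cases c with
  | zero => norm_num [coeffBound]
  | succ c =>
    rw [coeffBound, prod_range_succ, ← one_mul (2 * t ^ (c + 1))]
    refine mul_le_mul ?_ (hfactor c) (div_nonneg (pow_nonneg ht0 _) (by linarith)) zero_le_one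
    exact prod_le_one (fun i _ => div_nonneg (pow_nonneg ht0 _) (by linarith))
      fun i _ => (hfactor i).trans (hsmall i)

end Bounds

theorem stmt14_general (q b : ℕ) (hq : IsPrimePow q) (hb : 2 ≤ b) (c : ℕ)
    (l : ℝ)
    (hl : Filter.Tendsto
      (fun m : ℕ =>
        (∏ i ∈ Finset.range m,
          (1 - Polynomial.C (((q : ℝ) ^ (b * (i + 1)))⁻¹) * Polynomial.X)).coeff c)
      Filter.atTop (nhds l)) :
    |l| ≤ 2 * (q : ℝ) ^ b * ((q : ℝ) ^ (b * c))⁻¹ := by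
  have hqb : (2 : ℝ) ≤ (q : ℝ) ^ b := by
    have hq2 : (2 : ℝ) ≤ q := by exact_mod_cast hq.two_le
    exact hq2.trans (le_self_pow₀ (by linarith) (by omega))
  set t : ℝ := ((q : ℝ) ^ b)⁻¹ with ht_def
  have ht0 : 0 ≤ t := by positivity
  have ht : t ≤ 1 / 2 := by
    rw [ht_def, one_div]
    exact inv_anti₀ two_pos hqb
  have hx : ∀ i : ℕ, |((q : ℝ) ^ (b * (i + 1)))⁻¹| ≤ t ^ (i + 1) := fun i => by
    rw [pow_mul, ← inv_pow, abs_of_nonneg (by positivity)]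
  have hlim : |l| ≤ coeffBound t c :=
    le_of_tendsto' hl.abs fun m =>
      abs_coeff_partialProd_le_coeffBound (x := fun i => ((q : ℝ) ^ (b * (i + 1)))⁻¹)
        ht0 (by linarith) hx c m
  calc |l| ≤ 2 * t ^ c := hlim.trans (coeffBound_le_two_mul_pow ht0 ht c)
    _ ≤ 2 * (q : ℝ) ^ b * t ^ c := by
        gcongr
        linarith
    _ = 2 * (q : ℝ) ^ b * ((q : ℝ) ^ (b * c))⁻¹ := by rw [pow_mul, inv_pow]

/-- Let `q` be a prime power and `b ≥ 2` an integer.  The `c`-th Maclaurin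
coefficient of `L(u) = ∏_{i=1}^∞ (1 - u q^{-bi})` (i.e. the limit `l` of the `c`-th
coefficients of the partial products) satisfies `|l| ≤ 2 q^b · q^{-bc}` for `c ≥ 1`. -/
theorem stmt14 (q b : ℕ) (hq : IsPrimePow q) (hb : 2 ≤ b) (c : ℕ) (hc : 1 ≤ c)
    (l : ℝ)
    (hl : Filter.Tendsto
      (fun m : ℕ =>
        (∏ i ∈ Finset.range m,
          (1 - Polynomial.C (((q : ℝ) ^ (b * (i + 1)))⁻¹) * Polynomial.X)).coeff c)
      Filter.atTop (nhds l)) :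
    |l| ≤ 2 * (q : ℝ) ^ b * ((q : ℝ) ^ (b * c))⁻¹ :=
  stmt14_general q b hq hb c l hl
end

section
/- Let q be a prime power and b ≥ 2, let N = N(q,b) be the number of monic irreducible polynomials of degree b over GF(q), let ω = ∏_{i=1}^∞ (1 - q^{-bi}), and let H = (b q^{-b} / (1 - q^{-b})²) · ω^b. Then |(1 - (1-H)^N) - (1 - e^{-1})| < 4 e^{-1} b q^{-b/2}. -/
/-!
Write `x = q^{-b}` and `y = q^{-b/2}`.  Möbius inversion gives `|bN - q^b| ≤ 2 q^{b/2}`, i.e.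
`bNx = 1 + O(y)`, and the Euler product satisfies `1 - x/(1-x) ≤ ω ≤ 1 - x`, so that
`ω^b/(1-x)^2 = 1 + O(by)` by Bernoulli's inequality.  Hence `NH = 1 + O(by)` while `H = O(bx)`,
so `N log(1-H) = -1 + O(by)` and `(1-H)^N = e^{-1}(1 + O(by))`.  Tracking constants gives the
bound when `by < 11/25`; otherwise it is trivial, as
`|(1-H)^N - e^{-1}| ≤ 1 - e^{-1} < 4e^{-1}·11/25`.
-/

open Finset Real ArithmeticFunction

theorem geom_sum_range_succ_le_two_mul_pow {x : ℝ} (hx : 2 ≤ x) (m : ℕ) :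
    ∑ j ∈ range (m + 1), x ^ j ≤ 2 * x ^ m := by
  induction m with
  | zero => norm_num
  | succ m ih =>
    rw [sum_range_succ, pow_succ]
    nlinarith [pow_nonneg (by linarith : (0:ℝ) ≤ x) m]

theorem le_div_two_of_mem_properDivisors {d n : ℕ} (hd : d ∈ n.properDivisors) :
    d ≤ n / 2 := by
  obtain ⟨⟨k, rfl⟩, _⟩ := Nat.mem_properDivisors.mp hd
  have hk : 2 ≤ k := by
    have := Nat.one_lt_div_of_mem_properDivisors hd
    rwa [Nat.mul_div_cancel_left _ (Nat.pos_of_mem_properDivisors hd)] at this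
  rw [Nat.le_div_iff_mul_le two_pos]
  exact Nat.mul_le_mul_left d hk

theorem abs_sum_moebius_mul_pow_div_sub_pow_le {x : ℝ} (hx : 2 ≤ x) (b : ℕ) :
    |∑ d ∈ b.divisors, (moebius d : ℝ) * x ^ (b / d) - x ^ b| ≤ 2 * x ^ (b / 2) := by
  rcases eq_or_ne b 0 with rfl | hb
  · norm_num
  have hflip : ∑ d ∈ b.divisors, (moebius d : ℝ) * x ^ (b / d)
      = ∑ e ∈ b.divisors, (moebius (b / e) : ℝ) * x ^ e := by
    rw [← Nat.sum_div_divisors b]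
    refine sum_congr rfl fun d hd => ?_
    rw [Nat.div_div_self (Nat.dvd_of_mem_divisors hd) hb]
  rw [hflip, ← Nat.cons_self_properDivisors hb, sum_cons, Nat.div_self (Nat.pos_of_ne_zero hb),
    moebius_apply_one, Int.cast_one, one_mul, add_sub_cancel_left]
  calc |∑ e ∈ b.properDivisors, (moebius (b / e) : ℝ) * x ^ e|
      ≤ ∑ e ∈ b.properDivisors, x ^ e := by
        refine (abs_sum_le_sum_abs _ _).trans (sum_le_sum fun e _ => ?_)
        rw [abs_mul, abs_pow, abs_of_nonneg (by linarith : (0:ℝ) ≤ x)]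
        refine mul_le_of_le_one_left (by positivity) ?_
        exact_mod_cast abs_moebius_le_one
    _ ≤ ∑ e ∈ range (b / 2 + 1), x ^ e :=
        sum_le_sum_of_subset_of_nonneg
          (fun e he => mem_range_succ_iff.mpr (le_div_two_of_mem_properDivisors he))
          (fun e _ _ => by positivity)
    _ ≤ 2 * x ^ (b / 2) := geom_sum_range_succ_le_two_mul_pow hx _

theorem abs_sum_moebius_mul_pow_div_mul_inv_sub_one_le {x : ℝ} (hx : 2 ≤ x) (b : ℕ) :
    |(∑ d ∈ b.divisors, (moebius d : ℝ) * x ^ (b / d)) * (x ^ b)⁻¹ - 1|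
      ≤ 2 * (√x ^ b)⁻¹ := by
  have hx0 : 0 < x := by linarith
  have hsq : √x ^ b * √x ^ b = x ^ b := by rw [← mul_pow, mul_self_sqrt hx0.le]
  have hhalf : x ^ (b / 2) ≤ √x ^ b := by
    calc x ^ (b / 2) = √x ^ (2 * (b / 2)) := by rw [pow_mul, sq_sqrt hx0.le]
      _ ≤ √x ^ b := pow_le_pow_right₀ (by rw [le_sqrt] <;> linarith) (Nat.mul_div_le b 2)
  have hxb : 0 < x ^ b := by positivity
  have hS (S : ℝ) : S * (x ^ b)⁻¹ - 1 = (S - x ^ b) / x ^ b := by field_simp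
  rw [hS, abs_div, abs_of_pos hxb, div_le_iff₀ hxb]
  calc _ ≤ 2 * x ^ (b / 2) := abs_sum_moebius_mul_pow_div_sub_pow_le hx b
    _ ≤ 2 * √x ^ b := by gcongr
    _ = 2 * (√x ^ b)⁻¹ * x ^ b := by rw [← hsq]; field_simp

theorem one_sub_sum_range_le_prod_one_sub {a : ℕ → ℝ} (h0 : ∀ i, 0 ≤ a i)
    (h1 : ∀ i, a i ≤ 1) (n : ℕ) :
    1 - ∑ i ∈ range n, a i ≤ ∏ i ∈ range n, (1 - a i) := by
  induction n with
  | zero => simp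
  | succ n ih =>
    rw [sum_range_succ, prod_range_succ]
    have hS : 0 ≤ ∑ i ∈ range n, a i := sum_nonneg fun i _ => h0 i
    nlinarith [h0 n, h1 n]

theorem multipliable_one_sub_of_summable {a : ℕ → ℝ} (ha : Summable a) :
    Multipliable fun i => 1 - a i := by
  simpa only [sub_eq_add_neg] using Real.multipliable_one_add_of_summable ha.neg

theorem one_sub_tsum_le_tprod_one_sub {a : ℕ → ℝ} (h0 : ∀ i, 0 ≤ a i)
    (h1 : ∀ i, a i ≤ 1) (ha : Summable a) : 1 - ∑' i, a i ≤ ∏' i, (1 - a i) :=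
  le_of_tendsto_of_tendsto' (ha.tendsto_sum_tsum_nat.const_sub 1)
    (multipliable_one_sub_of_summable ha).tendsto_prod_tprod_nat
    (one_sub_sum_range_le_prod_one_sub h0 h1)

theorem tprod_one_sub_le_one_sub_zero {a : ℕ → ℝ} (h0 : ∀ i, 0 ≤ a i)
    (h1 : ∀ i, a i ≤ 1) (ha : Summable a) : ∏' i, (1 - a i) ≤ 1 - a 0 := by
  refine le_of_tendsto' ((multipliable_one_sub_of_summable ha).tendsto_prod_tprod_nat.comp
    (Filter.tendsto_add_atTop_nat 1)) fun n => ?_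
  rw [Function.comp_apply, prod_range_succ']
  refine mul_le_of_le_one_left (by linarith [h1 0]) (prod_le_one (fun i _ => ?_) fun i _ => ?_)
  · linarith [h1 (i + 1)]
  · linarith [h0 (i + 1)]

theorem tprod_one_sub_pow_succ_mem_Icc {x : ℝ} (hx0 : 0 ≤ x) (hx1 : x < 1) :
    ∏' i : ℕ, (1 - x ^ (i + 1)) ∈ Set.Icc (1 - x / (1 - x)) (1 - x) := by
  have h0 : ∀ i : ℕ, 0 ≤ x ^ (i + 1) := fun i => pow_nonneg hx0 _
  have h1 : ∀ i : ℕ, x ^ (i + 1) ≤ 1 := fun i => pow_le_one₀ hx0 hx1.le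
  have hsum : HasSum (fun i : ℕ => x ^ (i + 1)) (x / (1 - x)) := by
    simpa only [pow_succ', div_eq_mul_inv] using (hasSum_geometric_of_lt_one hx0 hx1).mul_left x
  constructor
  · rw [← hsum.tsum_eq]
    exact one_sub_tsum_le_tprod_one_sub h0 h1 hsum.summable
  · simpa using tprod_one_sub_le_one_sub_zero h0 h1 hsum.summable

theorem pow_div_one_sub_sq_mem_Icc {x ω : ℝ} {b : ℕ} (hb : 2 ≤ b) (hx0 : 0 ≤ x)
    (hx : x ≤ 1 / 2) (hω : ω ∈ Set.Icc (1 - x / (1 - x)) (1 - x)) :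
    ω ^ b / (1 - x) ^ 2 ∈ Set.Icc (1 - b * (x / (1 - x))) 1 := by
  obtain ⟨hlo, hhi⟩ := hω
  have hc : x / (1 - x) ≤ 1 := by rw [div_le_one (by linarith)]; linarith
  have hω0 : 0 ≤ ω := by linarith
  have hD : 0 < (1 - x) ^ 2 := by nlinarith
  have hpow : ω ^ b ≤ (1 - x) ^ 2 :=
    (pow_le_pow_left₀ hω0 hhi b).trans (pow_le_pow_of_le_one (by linarith) (by linarith) hb)
  constructor
  · have hbern : 1 - b * (x / (1 - x)) ≤ ω ^ b := by
      have hbernoulli := one_add_mul_le_pow (a := -(x / (1 - x))) (by linarith) b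
      have hmono := pow_le_pow_left₀ (by linarith) (by linarith : 1 + -(x / (1 - x)) ≤ ω) b
      linarith
    refine hbern.trans ((le_div_iff₀ hD).mpr ?_)
    exact mul_le_of_le_one_right (pow_nonneg hω0 b) (by nlinarith)
  · exact (div_le_one hD).mpr hpow

theorem abs_mul_sub_one_le {u r a c : ℝ} (hu : |u - 1| ≤ a) (ha : a ≤ 1)
    (hr : r ∈ Set.Icc (1 - c) 1) (hc : c ≤ 1) : |u * r - 1| ≤ a + c := by
  obtain ⟨hulo, huhi⟩ := abs_le.mp hu
  obtain ⟨hrlo, hrhi⟩ := hr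
  rw [abs_le]
  constructor <;> nlinarith

theorem abs_nat_mul_log_one_sub_add_one_le {N : ℕ} {H ε : ℝ} (hH0 : 0 ≤ H) (hH1 : H < 1)
    (hNH : |N * H - 1| ≤ ε) : |N * log (1 - H) + 1| ≤ (ε + H) / (1 - H) := by
  have hpos : 0 < 1 - H := by linarith
  have hN : (0 : ℝ) ≤ N := N.cast_nonneg
  obtain ⟨hlo, hhi⟩ := abs_le.mp hNH
  have hlog_le : log (1 - H) ≤ -H := by linarith [log_le_sub_one_of_pos hpos]
  have hlog_ge : -H ≤ log (1 - H) * (1 - H) := by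
    rw [← div_le_iff₀ hpos]
    calc -H / (1 - H) = 1 - (1 - H)⁻¹ := by field_simp; ring
      _ ≤ log (1 - H) := one_sub_inv_le_log_of_pos hpos
  rw [abs_le, neg_le, le_div_iff₀ hpos, le_div_iff₀ hpos]
  constructor
  · nlinarith [mul_le_mul_of_nonneg_left hlog_ge hN]
  · nlinarith [mul_le_mul_of_nonneg_left hlog_le hN]

theorem abs_one_sub_pow_sub_exp_neg_one_le {N : ℕ} {H ε : ℝ} (hH0 : 0 ≤ H) (hH1 : H < 1)
    (hNH : |N * H - 1| ≤ ε) (hεH : (ε + H) / (1 - H) ≤ 1) :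
    |(1 - H) ^ N - exp (-1)| ≤ 2 * exp (-1) * ((ε + H) / (1 - H)) := by
  have hlog := abs_nat_mul_log_one_sub_add_one_le hH0 hH1 hNH
  have hpow : (1 - H) ^ N = exp (-1) * exp (N * log (1 - H) + 1) := by
    rw [← exp_add, show -1 + (N * log (1 - H) + 1) = N * log (1 - H) by ring, exp_nat_mul,
      exp_log (by linarith)]
  have hexp : |exp (N * log (1 - H) + 1) - 1| ≤ 2 * ((ε + H) / (1 - H)) :=
    (abs_exp_sub_one_le (hlog.trans hεH)).trans (by linarith)
  rw [hpow, ← mul_sub_one, abs_mul, abs_of_pos (exp_pos _)]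
  linarith [mul_le_mul_of_nonneg_left hexp (exp_pos (-1)).le]

theorem abs_one_sub_pow_sub_exp_neg_one_lt {N : ℕ} {H s : ℝ} (hs0 : 0 < s) (hs : s < 11 / 25)
    (hH0 : 0 ≤ H) (hH : H ≤ 11 / 50 * s) (hNH : |N * H - 1| ≤ 5 / 4 * s) :
    |(1 - H) ^ N - exp (-1)| < 4 * exp (-1) * s := by
  have hH1 : H < 1 := by linarith
  have hδ : (5 / 4 * s + H) / (1 - H) < 2 * s := by
    rw [div_lt_iff₀ (by linarith)]
    nlinarith
  calc |(1 - H) ^ N - exp (-1)| ≤ 2 * exp (-1) * ((5 / 4 * s + H) / (1 - H)) :=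
        abs_one_sub_pow_sub_exp_neg_one_le hH0 hH1 hNH (by linarith)
    _ < 2 * exp (-1) * (2 * s) := by gcongr
    _ = 4 * exp (-1) * s := by ring

theorem abs_pow_sub_exp_neg_one_lt_of_le {N : ℕ} {z s : ℝ} (hs : 11 / 25 ≤ s)
    (hz0 : 0 ≤ z) (hz1 : z ≤ 1) : |z ^ N - exp (-1)| < 4 * exp (-1) * s := by
  have hzN : z ^ N ∈ Set.Icc (0 : ℝ) 1 := ⟨pow_nonneg hz0 N, pow_le_one₀ hz0 hz1⟩
  have he_gt := exp_neg_one_gt_d9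
  have he_lt := exp_neg_one_lt_half
  rw [abs_lt]
  constructor <;> nlinarith [hzN.1, hzN.2]

theorem abs_one_sub_mul_pow_sub_exp_neg_one_lt {b N : ℕ} {y r : ℝ} (hb : 2 ≤ b) (hy0 : 0 < y)
    (hs : b * y < 11 / 25) (hN : |b * N * y ^ 2 - 1| ≤ 2 * y)
    (hr : r ∈ Set.Icc (1 - b * (y ^ 2 / (1 - y ^ 2))) 1) :
    |(1 - b * y ^ 2 * r) ^ N - exp (-1)| < 4 * exp (-1) * (b * y) := by
  have hb2 : (2 : ℝ) ≤ b := by exact_mod_cast hb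
  have hys : 2 * y ≤ b * y := by nlinarith
  have hy : y < 11 / 50 := by linarith
  have hc : b * (y ^ 2 / (1 - y ^ 2)) ≤ b * y / 4 := by
    rw [mul_div_assoc', div_le_div_iff₀ (by nlinarith) four_pos]
    nlinarith [mul_pos (by linarith : (0 : ℝ) < b) hy0]
  have hr' : r ∈ Set.Icc (1 - b * y / 4) 1 := ⟨by linarith [hr.1], hr.2⟩
  have hNH : |N * (b * y ^ 2 * r) - 1| ≤ 5 / 4 * (b * y) := by
    have hprod := abs_mul_sub_one_le (hN.trans hys) (by linarith) hr' (by linarith)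
    rw [show (N : ℝ) * (b * y ^ 2 * r) = b * N * y ^ 2 * r by ring]
    linarith
  have hH : b * y ^ 2 * r ≤ 11 / 50 * (b * y) := by
    have hr0 : 0 ≤ r := by linarith [hr'.1]
    nlinarith [mul_le_of_le_one_right (by positivity : (0 : ℝ) ≤ b * y ^ 2) hr.2]
  exact abs_one_sub_pow_sub_exp_neg_one_lt (by positivity) hs
    (mul_nonneg (by positivity) (by linarith [hr'.1])) hH hNH

theorem abs_one_sub_mul_pow_sub_exp_neg_one_lt_of_mem_Icc {b N : ℕ} {y ω : ℝ} (hb : 2 ≤ b)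
    (hy0 : 0 < y) (hby : b * y ^ 2 ≤ 1) (hN : |b * N * y ^ 2 - 1| ≤ 2 * y)
    (hω : ω ∈ Set.Icc (1 - y ^ 2 / (1 - y ^ 2)) (1 - y ^ 2)) :
    |(1 - b * y ^ 2 / (1 - y ^ 2) ^ 2 * ω ^ b) ^ N - exp (-1)| < 4 * exp (-1) * (b * y) := by
  have hb2 : (2 : ℝ) ≤ b := by exact_mod_cast hb
  have hx : y ^ 2 ≤ 1 / 2 := by nlinarith
  have hr := pow_div_one_sub_sq_mem_Icc hb (sq_nonneg y) hx hω
  have hr0 : 0 ≤ ω ^ b / (1 - y ^ 2) ^ 2 := by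
    have hc : y ^ 2 / (1 - y ^ 2) ≤ 1 := by rw [div_le_one (by linarith)]; linarith
    exact div_nonneg (pow_nonneg (by linarith [hω.1]) b) (sq_nonneg _)
  rw [show b * y ^ 2 / (1 - y ^ 2) ^ 2 * ω ^ b = b * y ^ 2 * (ω ^ b / (1 - y ^ 2) ^ 2) by ring]
  rcases lt_or_ge (b * y) (11 / 25) with hs | hs
  · exact abs_one_sub_mul_pow_sub_exp_neg_one_lt hb hy0 hs hN hr
  · refine abs_pow_sub_exp_neg_one_lt_of_le hs ?_ ?_
    · nlinarith [mul_le_of_le_one_right (by positivity : (0 : ℝ) ≤ b * y ^ 2) hr.2]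
    · nlinarith [mul_nonneg (by positivity : (0 : ℝ) ≤ b * y ^ 2) hr0]

/-- Let `q` be a prime power and `b ≥ 2`, let `N = N(q,b) = (1/b)∑_{d∣b} μ(d) q^{b/d}`
be the number of monic irreducible polynomials of degree `b` over `GF(q)`, let
`ω = ∏_{i=1}^∞ (1 - q^{-bi})` and `H = (b q^{-b}/(1-q^{-b})²) ω^b`.  Then
`|(1 - (1-H)^N) - (1 - e⁻¹)| < 4 e⁻¹ b q^{-b/2}`. -/
theorem stmt18 (q b N : ℕ) (hq : IsPrimePow q) (hb : 2 ≤ b)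
    (hN : (N : ℝ) = (∑ d ∈ Nat.divisors b,
        (ArithmeticFunction.moebius d : ℝ) * (q : ℝ) ^ (b / d)) / b)
    (ω H : ℝ)
    (hω : ω = ∏' i : ℕ, (1 - ((q : ℝ) ^ (b * (i + 1)))⁻¹))
    (hH : H = (b * ((q : ℝ) ^ b)⁻¹ / (1 - ((q : ℝ) ^ b)⁻¹) ^ 2) * ω ^ b) :
    |(1 - (1 - H) ^ N) - (1 - Real.exp (-1))|
      < 4 * Real.exp (-1) * b * ((q : ℝ) ^ ((b : ℝ) / 2))⁻¹ := by
  have hq2 : (2 : ℝ) ≤ q := by exact_mod_cast hq.two_le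
  rw [rpow_div_two_eq_sqrt _ (by positivity), rpow_natCast, mul_assoc]
  set y := (√(q : ℝ) ^ b)⁻¹ with hy
  have hy0 : 0 < y := by positivity
  have hx : ((q : ℝ) ^ b)⁻¹ = y ^ 2 := by
    rw [hy, inv_pow, ← pow_mul, mul_comm, pow_mul, sq_sqrt (by positivity)]
  have hby : b * y ^ 2 ≤ 1 := by
    rw [← hx, ← div_eq_mul_inv, div_le_one (by positivity)]
    exact_mod_cast (Nat.lt_pow_self hq.one_lt).le
  have hNy : |b * N * y ^ 2 - 1| ≤ 2 * y := by
    rw [hN, mul_div_cancel₀ _ (by positivity), ← hx]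
    exact abs_sum_moebius_mul_pow_div_mul_inv_sub_one_le hq2 b
  have hωy : ω ∈ Set.Icc (1 - y ^ 2 / (1 - y ^ 2)) (1 - y ^ 2) := by
    have hb2 : (2 : ℝ) ≤ b := by exact_mod_cast hb
    have hx1 : y ^ 2 < 1 := by nlinarith
    have hterm (i : ℕ) : ((q : ℝ) ^ (b * (i + 1)))⁻¹ = (y ^ 2) ^ (i + 1) := by
      rw [← hx, inv_pow, pow_mul]
    simp only [hω, hterm]
    exact tprod_one_sub_pow_succ_mem_Icc (sq_nonneg y) hx1
  rw [abs_sub_comm, sub_sub_sub_cancel_left, hH, hx]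
  exact abs_one_sub_mul_pow_sub_exp_neg_one_lt_of_mem_Icc hb hy0 hby hNy hωy
end
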